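/- For the cycle C_n with n ≥ 6 or n = 4, χ_{μ_i}(C_n) = χ_μ(C_n) = ⌈n/3⌉; moreover χ_{μ_i}(C_3) = χ_{μ_i}(C_5) = 3, χ_μ(C_5) = 2, and χ_μ(C_3) = 1. -/

import Mathlib

open SimpleGraph

variable {V W : Type*}

/-- Two vertices of `X` are `X`-visible if some geodesic between them has all
internal vertices outside `X`; `X` is a mutual-visibility set if this holds
for every reachable pair of vertices of `X`. -/
def IsMVSet (G : SimpleGraph V) (X : Set V) : Prop :=
  ∀ x ∈ X, ∀ y ∈ X, x ≠ y → G.Reachable x y →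
    ∃ p : G.Walk x y, p.length = G.dist x y ∧
      ∀ z ∈ p.support, z ≠ x → z ≠ y → z ∉ X

/-- An independent mutual-visibility set. -/
def IsIMVSet (G : SimpleGraph V) (X : Set V) : Prop :=
  (∀ x ∈ X, ∀ y ∈ X, ¬ G.Adj x y) ∧ IsMVSet G X

/-- The mutual-visibility chromatic number: the least `k` such that the vertex
set partitions into `k` mutual-visibility sets. -/
noncomputable def mvChrom (G : SimpleGraph V) : ℕ :=
  sInf {k | ∃ f : V → Fin k, ∀ i, IsMVSet G (f ⁻¹' {i})}

/-- The independent mutual-visibility chromatic number. -/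
noncomputable def imvChrom (G : SimpleGraph V) : ℕ :=
  sInf {k | ∃ f : V → Fin k, ∀ i, IsIMVSet G (f ⁻¹' {i})}

/-- The chromatic number, as a natural number. -/
noncomputable def chromNat (G : SimpleGraph V) : ℕ :=
  sInf {k | G.Colorable k}

/-- The independent mutual-visibility number `μᵢ(G)`. -/
noncomputable def imvNum (G : SimpleGraph V) : ℕ :=
  sSup {n | ∃ s : Finset V, IsIMVSet G ↑s ∧ s.card = n}

/-- The independence number `α(G)`. -/
noncomputable def indepNum (G : SimpleGraph V) : ℕ :=
  sSup {n | ∃ s : Finset V, (∀ x ∈ s, ∀ y ∈ s, ¬ G.Adj x y) ∧ s.card = n}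

/-!
On `C_n` the arc of length `g ≤ n / 2` from `x` to `x + g` is a geodesic, so three vertices
cutting the cycle into arcs of lengths at most `n / 2` form a mutual-visibility set, and an
independent one if every arc has length at least 2. Conversely, for four vertices
`a < b < c < d` every `a`–`c` walk passes through `b` or `d`, so a mutual-visibility set has at
most three vertices and at least `⌈n / 3⌉ = (n + 2) / 3` colours are needed. With
`k = (n + 2) / 3`, the colour classes of `v ↦ v mod k` are `{i, i + k, i + 2k}` or `{i, i + k}`,
which meet these conditions; for independence this needs `n ≠ 2k + 1`, so `C_7` gets an explicit
colouring. For `C_3` and `C_5`, an independent colouring is proper and odd cycles have chromatic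
number 3.
-/

section Visibility

variable {G : SimpleGraph V} {X Y : Set V} {a b c x y : V}

def Visible (G : SimpleGraph V) (X : Set V) (x y : V) : Prop :=
  ∃ p : G.Walk x y, p.length = G.dist x y ∧ ∀ z ∈ p.support, z ≠ x → z ≠ y → z ∉ X

lemma Visible.symm (h : Visible G X x y) : Visible G X y x := by
  obtain ⟨p, hp, hX⟩ := h
  exact ⟨p.reverse, by rw [Walk.length_reverse, hp, SimpleGraph.dist_comm],
    fun z hz hzy hzx => hX z (by simpa using hz) hzx hzy⟩

lemma Visible.mono (hYX : Y ⊆ X) (h : Visible G X x y) : Visible G Y x y := by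
  obtain ⟨p, hp, hX⟩ := h
  exact ⟨p, hp, fun z hz hzx hzy hzY => hX z hz hzx hzy (hYX hzY)⟩

lemma SimpleGraph.Reachable.visible_of_subset (h : G.Reachable x y) (hX : X ⊆ {x, y}) :
    Visible G X x y := by
  obtain ⟨p, hp⟩ := h.exists_walk_length_eq_dist
  refine ⟨p, hp, fun z _ hzx hzy hzX => ?_⟩
  rcases hX hzX with rfl | rfl
  exacts [hzx rfl, hzy rfl]

lemma IsMVSet.mono (hYX : Y ⊆ X) (hX : IsMVSet G X) : IsMVSet G Y :=
  fun x hx y hy hxy hr => Visible.mono hYX (hX x (hYX hx) y (hYX hy) hxy hr)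

lemma IsIMVSet.mono (hYX : Y ⊆ X) (hX : IsIMVSet G X) : IsIMVSet G Y :=
  ⟨fun x hx y hy => hX.1 x (hYX hx) y (hYX hy), hX.2.mono hYX⟩

lemma isMVSet_pair (a b : V) : IsMVSet G {a, b} := by
  intro x hx y hy hxy hr
  refine hr.visible_of_subset ?_
  rintro z (rfl | rfl) <;>
    rcases hx with rfl | rfl <;> rcases hy with rfl | rfl <;> simp_all

lemma Set.Subsingleton.isIMVSet (hX : X.Subsingleton) : IsIMVSet G X :=
  ⟨fun x hx _ hy => hX hx hy ▸ G.loopless.irrefl x,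
    fun _ hx _ hy hxy => absurd (hX hx hy) hxy⟩

lemma isMVSet_triple (hab : Visible G {a, b, c} a b) (hbc : Visible G {a, b, c} b c)
    (hca : Visible G {a, b, c} c a) : IsMVSet G {a, b, c} := by
  rintro x (rfl | rfl | rfl) y (rfl | rfl | rfl) hxy - <;>
    first | exact absurd rfl hxy | assumption | exact Visible.symm ‹_›

lemma isIMVSet_pair (hab : ¬G.Adj a b) : IsIMVSet G {a, b} := by
  refine ⟨?_, isMVSet_pair a b⟩
  rintro x (rfl | rfl) y (rfl | rfl) <;> simp_all [adj_comm]

lemma isIMVSet_triple (hab : ¬G.Adj a b) (hbc : ¬G.Adj b c) (hca : ¬G.Adj c a)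
    (hX : IsMVSet G {a, b, c}) : IsIMVSet G {a, b, c} := by
  refine ⟨?_, hX⟩
  rintro x (rfl | rfl | rfl) y (rfl | rfl | rfl) <;> simp_all [adj_comm]

end Visibility

section Coloring

variable {G : SimpleGraph V} {k m : ℕ}

def IsMVColoring (G : SimpleGraph V) (f : V → Fin k) : Prop :=
  ∀ i, IsMVSet G (f ⁻¹' {i})

def IsIMVColoring (G : SimpleGraph V) (f : V → Fin k) : Prop :=
  ∀ i, IsIMVSet G (f ⁻¹' {i})

lemma IsIMVColoring.isMVColoring {f : V → Fin k} (hf : IsIMVColoring G f) : IsMVColoring G f :=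
  fun i => (hf i).2

lemma IsIMVColoring.chromaticNumber_le {f : V → Fin k} (hf : IsIMVColoring G f) :
    G.chromaticNumber ≤ k :=
  Colorable.chromaticNumber_le
    ⟨Coloring.mk f fun {x y} hxy hf' => (hf (f y)).1 x hf' y rfl hxy⟩

lemma mvChrom_eq_of_forall_le (hm : ∃ f : V → Fin m, IsMVColoring G f)
    (hle : ∀ k (f : V → Fin k), IsMVColoring G f → m ≤ k) : mvChrom G = m :=
  IsLeast.csInf_eq ⟨hm, fun k ⟨f, hf⟩ => hle k f hf⟩

lemma imvChrom_eq_of_forall_le (hm : ∃ f : V → Fin m, IsIMVColoring G f)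
    (hle : ∀ k (f : V → Fin k), IsIMVColoring G f → m ≤ k) : imvChrom G = m :=
  IsLeast.csInf_eq ⟨hm, fun k ⟨f, hf⟩ => hle k f hf⟩

lemma isIMVColoring_of_injective {f : V → Fin k} (hf : Function.Injective f) :
    IsIMVColoring G f :=
  fun _ => (Set.subsingleton_singleton.preimage hf).isIMVSet

end Coloring

section Cycle

open Fin.NatCast

variable {n : ℕ}

lemma Fin.val_sub_eq_ite (a b : Fin n) :
    (a - b).val = if b.val ≤ a.val then a.val - b.val else n + a.val - b.val := by
  split_ifs with h
  · exact Fin.sub_val_of_le h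
  · exact Fin.coe_sub_iff_lt.mpr (by omega)

lemma Fin.natCast_inj_of_lt [NeZero n] {i j : ℕ} (hi : i < n) (hj : j < n)
    (h : (i : Fin n) = j) : i = j :=
  (Fin.val_cast_of_lt hi).symm.trans ((congrArg Fin.val h).trans (Fin.val_cast_of_lt hj))

lemma Fin.val_add_natCast_sub_self [NeZero n] (x : Fin n) {g : ℕ} (hg : g < n) :
    (x + g - x).val = g := by
  rw [add_sub_cancel_left, Fin.val_cast_of_lt hg]

lemma Fin.val_sub_add_natCast_self [NeZero n] (x : Fin n) {g : ℕ} (hg₀ : 0 < g) (hg : g < n) :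
    (x - (x + g)).val = n - g := by
  rw [sub_add_cancel_left, Fin.val_neg, if_neg, Fin.val_cast_of_lt hg]
  rw [Fin.ext_iff, Fin.val_cast_of_lt hg, Fin.val_zero]
  omega

lemma cycleGraph_adj_iff_val {u v : Fin n} : (cycleGraph n).Adj u v ↔
    u.val + 1 = v.val ∨ v.val + 1 = u.val ∨
      1 < n ∧ (u.val + 1 = n ∧ v.val = 0 ∨ v.val + 1 = n ∧ u.val = 0) := by
  have := u.isLt
  have := v.isLt
  rw [cycleGraph_adj', Fin.val_sub_eq_ite, Fin.val_sub_eq_ite]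
  split_ifs <;> omega

lemma cycleGraph_min_val_sub_le_length {u v : Fin n} (p : (cycleGraph n).Walk u v) :
    min (v - u).val (u - v).val ≤ p.length := by
  induction p with
  | nil => simp [Fin.val_sub_eq_ite]
  | @cons u w v h q ih =>
    have := u.isLt
    have := v.isLt
    have := w.isLt
    rw [cycleGraph_adj_iff_val] at h
    rw [Fin.val_sub_eq_ite, Fin.val_sub_eq_ite] at ih ⊢
    rw [Walk.length_cons]
    split_ifs at ih ⊢ <;> omega

lemma cycleGraph_exists_walk_add_natCast [NeZero n] (hn : 1 < n) (x : Fin n) (L : ℕ) :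
    ∃ p : (cycleGraph n).Walk x (x + L),
      p.length = L ∧ ∀ z ∈ p.support, ∃ j ≤ L, z = x + j := by
  induction L with
  | zero =>
    exact ⟨Walk.nil.copy rfl (by simp), by simp, fun z hz => ⟨0, le_rfl, by simpa using hz⟩⟩
  | succ L ih =>
    obtain ⟨p, hp, hsupp⟩ := ih
    have hadj : (cycleGraph n).Adj (x + L) (x + (L + 1 : ℕ)) := by
      rw [cycleGraph_adj']
      right
      rw [Nat.cast_succ, ← add_assoc, add_sub_cancel_left, Fin.val_one', Nat.mod_eq_of_lt hn]
    refine ⟨p.concat hadj, by simp [hp], fun z hz => ?_⟩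
    rw [Walk.support_concat, List.mem_append, List.mem_singleton] at hz
    rcases hz with hz | rfl
    · obtain ⟨j, hj, rfl⟩ := hsupp z hz
      exact ⟨j, by omega, rfl⟩
    · exact ⟨L + 1, le_rfl, rfl⟩

lemma cycleGraph_dist_add_natCast [NeZero n] (x : Fin n) {g : ℕ} (hg : 2 * g ≤ n) :
    (cycleGraph n).dist x (x + g) = g := by
  rcases Nat.eq_zero_or_pos g with rfl | hg₀
  · simp
  obtain ⟨p, hp, -⟩ := cycleGraph_exists_walk_add_natCast (by omega) x g
  refine le_antisymm ((dist_le p).trans hp.le) ?_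
  obtain ⟨q, hq⟩ := (cycleGraph_preconnected x (x + g)).exists_walk_length_eq_dist
  have := cycleGraph_min_val_sub_le_length q
  rw [Fin.val_add_natCast_sub_self x (by omega), Fin.val_sub_add_natCast_self x hg₀ (by omega)]
    at this
  omega

lemma cycleGraph_not_adj_add_natCast [NeZero n] (x : Fin n) {t : ℕ} (ht : 2 ≤ t)
    (htn : t + 2 ≤ n) : ¬(cycleGraph n).Adj x (x + t) := by
  rw [cycleGraph_adj', Fin.val_add_natCast_sub_self x (by omega),
    Fin.val_sub_add_natCast_self x (by omega) (by omega)]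
  omega

lemma cycleGraph_isIMVSet_pair_add [NeZero n] (x : Fin n) {t : ℕ} (ht : 2 ≤ t)
    (htn : t + 2 ≤ n) : IsIMVSet (cycleGraph n) {x, x + t} :=
  isIMVSet_pair (cycleGraph_not_adj_add_natCast x ht htn)

lemma cycleGraph_visible_add_natCast [NeZero n] {X : Set (Fin n)} (x : Fin n) {g : ℕ}
    (hg₀ : 0 < g) (hg : 2 * g ≤ n) (hX : ∀ j, 0 < j → j < g → x + (j : Fin n) ∉ X) :
    Visible (cycleGraph n) X x (x + g) := by
  obtain ⟨p, hp, hsupp⟩ := cycleGraph_exists_walk_add_natCast (by omega) x g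
  refine ⟨p, by rw [hp, cycleGraph_dist_add_natCast x hg], fun z hz hzx hzy => ?_⟩
  obtain ⟨j, hj, rfl⟩ := hsupp z hz
  refine hX j (Nat.pos_of_ne_zero ?_) (lt_of_le_of_ne hj ?_)
  · rintro rfl; simp at hzx
  · rintro rfl; exact hzy rfl

lemma cycleGraph_visible_of_gaps [NeZero n] {X : Set (Fin n)} {a b c : Fin n} {g₁ g₂ : ℕ}
    (hb : b = a + g₁) (hc : c = a + (g₁ + g₂ : ℕ)) (hX : X ⊆ {a, b, c}) (h₁ : 0 < g₁)
    (h₁' : 2 * g₁ ≤ n) (h : g₁ + g₂ < n) : Visible (cycleGraph n) X a b := by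
  subst hb hc
  refine cycleGraph_visible_add_natCast a h₁ h₁' fun j hj hjg hjX => ?_
  have hne : ∀ m < n, m ≠ j → a + (j : Fin n) ≠ a + m := fun m hm hmj h =>
    hmj (Fin.natCast_inj_of_lt (by omega) hm (add_left_cancel h)).symm
  rcases hX hjX with h' | h' | h'
  · exact hne 0 (by omega) (by omega) (by simpa using h')
  · exact hne g₁ (by omega) (by omega) h'
  · exact hne (g₁ + g₂) h (by omega) h'

lemma Fin.eq_add_natCast_add [NeZero n] {x y z : Fin n} {g h : ℕ} (hy : y = x + g)
    (hz : z = y + h) : z = x + (g + h : ℕ) := by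
  rw [hz, hy, Nat.cast_add, add_assoc]

lemma Fin.eq_add_natCast_of_gaps [NeZero n] {a b c : Fin n} {g₁ g₂ g₃ : ℕ}
    (hb : b = a + g₁) (hc : c = b + g₂) (hsum : g₁ + g₂ + g₃ = n) : a = c + g₃ := by
  rw [Fin.eq_add_natCast_add hb hc, add_assoc, ← Nat.cast_add, hsum, Fin.natCast_self, add_zero]

lemma cycleGraph_isMVSet_of_gaps [NeZero n] {a b c : Fin n} {g₁ g₂ g₃ : ℕ}
    (hb : b = a + g₁) (hc : c = b + g₂) (hsum : g₁ + g₂ + g₃ = n)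
    (h₁ : 0 < g₁) (h₂ : 0 < g₂) (h₃ : 0 < g₃)
    (h₁' : 2 * g₁ ≤ n) (h₂' : 2 * g₂ ≤ n) (h₃' : 2 * g₃ ≤ n) :
    IsMVSet (cycleGraph n) {a, b, c} := by
  have ha := Fin.eq_add_natCast_of_gaps hb hc hsum
  have hbca : ({a, b, c} : Set (Fin n)) ⊆ {b, c, a} := by rintro z (rfl | rfl | rfl) <;> simp
  have hcab : ({a, b, c} : Set (Fin n)) ⊆ {c, a, b} := by rintro z (rfl | rfl | rfl) <;> simp
  refine isMVSet_triple ?_ ?_ ?_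
  · exact cycleGraph_visible_of_gaps hb (Fin.eq_add_natCast_add hb hc) subset_rfl h₁ h₁'
      (by omega)
  · exact cycleGraph_visible_of_gaps hc (Fin.eq_add_natCast_add hc ha) hbca h₂ h₂' (by omega)
  · exact cycleGraph_visible_of_gaps ha (Fin.eq_add_natCast_add ha hb) hcab h₃ h₃' (by omega)

lemma cycleGraph_isIMVSet_of_gaps [NeZero n] {a b c : Fin n} {g₁ g₂ g₃ : ℕ}
    (hb : b = a + g₁) (hc : c = b + g₂) (hsum : g₁ + g₂ + g₃ = n)
    (h₁ : 2 ≤ g₁) (h₂ : 2 ≤ g₂) (h₃ : 2 ≤ g₃)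
    (h₁' : 2 * g₁ ≤ n) (h₂' : 2 * g₂ ≤ n) (h₃' : 2 * g₃ ≤ n) :
    IsIMVSet (cycleGraph n) {a, b, c} := by
  have ha := Fin.eq_add_natCast_of_gaps hb hc hsum
  refine isIMVSet_triple ?_ ?_ ?_ (cycleGraph_isMVSet_of_gaps hb hc hsum
    (by omega) (by omega) (by omega) h₁' h₂' h₃')
  · exact hb ▸ cycleGraph_not_adj_add_natCast a h₁ (by omega)
  · exact hc ▸ cycleGraph_not_adj_add_natCast b h₂ (by omega)
  · exact ha ▸ cycleGraph_not_adj_add_natCast c h₃ (by omega)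

lemma cycleGraph_eq_or_eq_of_adj_of_mem_Ioo {b d u w : Fin n} (h : (cycleGraph n).Adj w u)
    (hw : w ∈ Set.Ioo b d) (hu : u ∉ Set.Ioo b d) : u = b ∨ u = d := by
  rw [cycleGraph_adj_iff_val] at h
  simp only [Set.mem_Ioo, not_and_or, not_lt] at hw hu
  have := d.isLt
  rw [Fin.ext_iff, Fin.ext_iff]
  omega

lemma cycleGraph_card_le_three_of_isMVSet {s : Finset (Fin n)}
    (hs : IsMVSet (cycleGraph n) s) : s.card ≤ 3 := by
  by_contra! h
  obtain ⟨t, hts, ht⟩ := Finset.exists_subset_card_eq (show 4 ≤ s.card by omega)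
  set e := t.orderEmbOfFin ht
  have mem (i : Fin 4) : e i ∈ s := hts (t.orderEmbOfFin_mem ht i)
  obtain ⟨p, -, hp⟩ :=
    hs (e 2) (mem 2) (e 0) (mem 0) (by simp) (cycleGraph_preconnected _ _)
  obtain ⟨d, hd, hin, hout⟩ := p.exists_boundary_dart (Set.Ioo (e 1) (e 3))
    ⟨by simp, by simp⟩ (by simp)
  have hsnd := p.dart_snd_mem_support_of_mem_darts hd
  rcases cycleGraph_eq_or_eq_of_adj_of_mem_Ioo d.adj hin hout with h1 | h3
  · exact hp _ hsnd (by simp [h1]) (by simp [h1]) (h1 ▸ mem 1)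
  · exact hp _ hsnd (by simp [h3]) (by simp [h3]) (h3 ▸ mem 3)

lemma cycleGraph_le_three_mul_of_isMVColoring {k : ℕ} {f : Fin n → Fin k}
    (hf : IsMVColoring (cycleGraph n) f) : n ≤ 3 * k := by
  simpa using Finset.card_le_mul_card_image_of_maps_to (s := Finset.univ) (t := Finset.univ)
    (fun v _ => Finset.mem_univ (f v)) 3
    fun i _ => cycleGraph_card_le_three_of_isMVSet ((hf i).mono (by intro v; simp))

lemma cycleGraph_eq_of_val_mod [NeZero n] {k : ℕ} (hk : n ≤ 3 * k) {v : Fin n} {i : ℕ}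
    (hv : v.val % k = i) : v = i ∨ v = i + k ∨ i + 2 * k < n ∧ v = i + k + k := by
  obtain ⟨q, hq⟩ : ∃ q, v.val = i + k * q := ⟨v.val / k, by rw [← hv, Nat.mod_add_div]⟩
  have hq3 : q < 3 := by
    by_contra!
    have := Nat.mul_le_mul_left k this
    omega
  rw [← Fin.cast_val_eq_self v, hq]
  interval_cases q
  · simp
  · simp
  · refine Or.inr (Or.inr ⟨by omega, ?_⟩)
    rw [mul_two, Nat.cast_add, Nat.cast_add, add_assoc]

lemma cycleGraph_exists_isMVColoring {k : ℕ} (hk : 0 < k) (h2k : 2 * k ≤ n)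
    (h3k : n ≤ 3 * k) :
    ∃ f : Fin n → Fin k, IsMVColoring (cycleGraph n) f := by
  have : NeZero n := ⟨by omega⟩
  refine ⟨fun v => ⟨v.val % k, Nat.mod_lt _ hk⟩, fun i => ?_⟩
  by_cases hi : i + 2 * k < n
  · refine (cycleGraph_isMVSet_of_gaps (a := (i.val : Fin n)) (g₃ := n - 2 * k) rfl rfl
      (by omega) hk hk (by omega) (by omega) (by omega) (by omega)).mono fun v hv => ?_
    rcases cycleGraph_eq_of_val_mod h3k (Fin.ext_iff.mp hv) with h | h | ⟨-, h⟩ <;> simp [h]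
  · refine (isMVSet_pair (i.val : Fin n) (i + k)).mono fun v hv => ?_
    rcases cycleGraph_eq_of_val_mod h3k (Fin.ext_iff.mp hv) with h | h | ⟨h', -⟩
    · simp [h]
    · simp [h]
    · exact absurd h' hi

lemma cycleGraph_exists_isIMVColoring {k : ℕ} (hk : 2 ≤ k) (h2k : 2 * k ≤ n)
    (h3k : n ≤ 3 * k) (hn : n ≠ 2 * k + 1) :
    ∃ f : Fin n → Fin k, IsIMVColoring (cycleGraph n) f := by
  have : NeZero n := ⟨by omega⟩
  refine ⟨fun v => ⟨v.val % k, Nat.mod_lt _ (by omega)⟩, fun i => ?_⟩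
  by_cases hi : i + 2 * k < n
  · refine (cycleGraph_isIMVSet_of_gaps (a := (i.val : Fin n)) (g₃ := n - 2 * k) rfl rfl
      (by omega) hk hk (by omega) (by omega) (by omega) (by omega)).mono fun v hv => ?_
    rcases cycleGraph_eq_of_val_mod h3k (Fin.ext_iff.mp hv) with h | h | ⟨-, h⟩ <;> simp [h]
  · refine (cycleGraph_isIMVSet_pair_add (i.val : Fin n) hk (by omega)).mono fun v hv => ?_
    rcases cycleGraph_eq_of_val_mod h3k (Fin.ext_iff.mp hv) with h | h | ⟨h', -⟩
    · simp [h]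
    · simp [h]
    · exact absurd h' hi

lemma cycleGraph_seven_exists_isIMVColoring :
    ∃ f : Fin 7 → Fin 3, IsIMVColoring (cycleGraph 7) f := by
  refine ⟨![0, 1, 2, 0, 1, 0, 2], fun i => ?_⟩
  fin_cases i
  · exact (cycleGraph_isIMVSet_of_gaps (a := 0) (g₁ := 3) (g₂ := 2) (g₃ := 2) rfl rfl rfl
      (by norm_num) le_rfl le_rfl (by norm_num) (by norm_num) (by norm_num)).mono
      (by intro v hv; fin_cases v <;> simp_all)
  · exact (cycleGraph_isIMVSet_pair_add (1 : Fin 7) (t := 3) (by norm_num) (by norm_num)).mono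
      (by intro v hv; fin_cases v <;> simp_all)
  · exact (cycleGraph_isIMVSet_pair_add (2 : Fin 7) (t := 4) (by norm_num) (by norm_num)).mono
      (by intro v hv; fin_cases v <;> simp_all)

end Cycle

lemma mvChrom_cycleGraph {n : ℕ} (hn : 2 ≤ n) : mvChrom (cycleGraph n) = (n + 2) / 3 :=
  mvChrom_eq_of_forall_le (cycleGraph_exists_isMVColoring (by omega) (by omega) (by omega))
    fun _ _ hf => by have := cycleGraph_le_three_mul_of_isMVColoring hf; omega

lemma imvChrom_cycleGraph {n : ℕ} (hn : n = 4 ∨ 6 ≤ n) :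
    imvChrom (cycleGraph n) = (n + 2) / 3 := by
  refine imvChrom_eq_of_forall_le ?_ fun _ _ hf => by
    have := cycleGraph_le_three_mul_of_isMVColoring hf.isMVColoring; omega
  rcases eq_or_ne n 7 with rfl | h7
  · exact cycleGraph_seven_exists_isIMVColoring
  · exact cycleGraph_exists_isIMVColoring (by omega) (by omega) (by omega) (by omega)

lemma three_le_of_isIMVColoring_cycleGraph_of_odd {n k : ℕ} (hn : 2 ≤ n) (hodd : Odd n)
    {f : Fin n → Fin k} (hf : IsIMVColoring (cycleGraph n) f) : 3 ≤ k := by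
  have := hf.chromaticNumber_le
  rwa [chromaticNumber_cycleGraph_of_odd n hn hodd, Nat.ofNat_le_cast] at this

lemma imvChrom_cycleGraph_three : imvChrom (cycleGraph 3) = 3 :=
  imvChrom_eq_of_forall_le ⟨id, isIMVColoring_of_injective Function.injective_id⟩
    fun _ _ => three_le_of_isIMVColoring_cycleGraph_of_odd (by norm_num) (by decide)

lemma imvChrom_cycleGraph_five : imvChrom (cycleGraph 5) = 3 := by
  refine imvChrom_eq_of_forall_le ⟨![0, 1, 0, 1, 2], fun i => ?_⟩
    fun _ _ => three_le_of_isIMVColoring_cycleGraph_of_odd (by norm_num) (by decide)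
  fin_cases i
  · exact (cycleGraph_isIMVSet_pair_add (0 : Fin 5) (t := 2) le_rfl (by norm_num)).mono
      (by intro v hv; fin_cases v <;> simp_all)
  · exact (cycleGraph_isIMVSet_pair_add (1 : Fin 5) (t := 2) le_rfl (by norm_num)).mono
      (by intro v hv; fin_cases v <;> simp_all)
  · exact (cycleGraph_isIMVSet_pair_add (4 : Fin 5) (t := 2) le_rfl (by norm_num)).mono
      (by intro v hv; fin_cases v <;> simp_all)

theorem stmt12 :
    (∀ n : ℕ, (n = 4 ∨ 6 ≤ n) →
      imvChrom (cycleGraph n) = (n + 2) / 3 ∧ mvChrom (cycleGraph n) = (n + 2) / 3) ∧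
    imvChrom (cycleGraph 3) = 3 ∧ imvChrom (cycleGraph 5) = 3 ∧
    mvChrom (cycleGraph 5) = 2 ∧ mvChrom (cycleGraph 3) = 1 :=
  ⟨fun _ hn => ⟨imvChrom_cycleGraph hn, mvChrom_cycleGraph (by omega)⟩,
    imvChrom_cycleGraph_three, imvChrom_cycleGraph_five,
    mvChrom_cycleGraph (by norm_num), mvChrom_cycleGraph (by norm_num)⟩
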